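/- arXiv:2103.13849 — 4 statements merged into one kernel-verified Lean document; each statement's English description precedes it below -/
import Mathlib

section
/- The map sending x = (x₀,x₁,x₂,x₃) ∈ S³₁ (i.e., -x₀²+x₁²+x₂²+x₃² = 1) to (x₁,x₂,x₃)/(x₀ + √(x₀²+x₁²+x₂²+x₃²)) takes values in the hollow ball H = {y ∈ R³ : √2 - 1 < ‖y‖ < √2 + 1}. -/
open Real

theorem stmt5 (x : Fin 4 → ℝ)
    (hx : -(x 0)^2 + (x 1)^2 + (x 2)^2 + (x 3)^2 = 1)
    (y : EuclideanSpace ℝ (Fin 3))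
    (hy : ∀ i : Fin 3, y i = x i.succ /
      (x 0 + Real.sqrt ((x 0)^2 + (x 1)^2 + (x 2)^2 + (x 3)^2))) :
    Real.sqrt 2 - 1 < ‖y‖ ∧ ‖y‖ < Real.sqrt 2 + 1 := by
  set t := x 0 with ht
  have harg : (x 0)^2 + (x 1)^2 + (x 2)^2 + (x 3)^2 = 1 + 2*t^2 := by
    rw [← ht]; linarith
  set s := Real.sqrt (1 + 2*t^2) with hs
  have hs0 : 0 ≤ s := Real.sqrt_nonneg _
  have hs2 : s^2 = 1 + 2*t^2 := Real.sq_sqrt (by positivity)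
  have hsp : 0 < s := Real.sqrt_pos.mpr (by positivity)
  set q := Real.sqrt (1 + t^2) with hq
  have hq0 : 0 < q := Real.sqrt_pos.mpr (by positivity)
  have hq2 : q^2 = 1 + t^2 := Real.sq_sqrt (by positivity)
  have hqt : 0 < q + t := by nlinarith
  have hd : 0 < t + s := by nlinarith
  set r := Real.sqrt 2 with hr
  have hr2 : r^2 = 2 := Real.sq_sqrt (by norm_num)
  have hr0 : 0 ≤ r := Real.sqrt_nonneg 2
  have hr1 : 1 < r := by nlinarith
  clear_value t s q r
  have hyi : ∀ i : Fin 3, y i = x i.succ / (t + s) := by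
    intro i
    have h5 : t^2 + (x 1)^2 + (x 2)^2 + (x 3)^2 = 1 + 2*t^2 := by linarith
    rw [hy i, h5, ← hs]
  have key : ‖y‖^2 * (t+s)^2 = 1 + t^2 := by
    have hnorm : ‖y‖ = Real.sqrt (∑ i, ‖y i‖^2) := EuclideanSpace.norm_eq y
    have hsum : (∑ i, ‖y i‖^2) = ((x 1)^2 + (x 2)^2 + (x 3)^2) / (t+s)^2 := by
      rw [Fin.sum_univ_three, hyi 0, hyi 1, hyi 2]
      have h0 : (0 : Fin 3).succ = (1 : Fin 4) := rfl
      have h1 : (1 : Fin 3).succ = (2 : Fin 4) := rfl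
      have h2 : (2 : Fin 3).succ = (3 : Fin 4) := rfl
      rw [h0, h1, h2]
      simp only [Real.norm_eq_abs, sq_abs]
      field_simp
    rw [hnorm, Real.sq_sqrt (by positivity : (0:ℝ) ≤ ∑ i, ‖y i‖^2), hsum]
    field_simp
    linarith
  have hN0 : 0 ≤ ‖y‖ := norm_nonneg y
  have hNq : ‖y‖ * (t + s) = q := by
    have h1 : (‖y‖ * (t+s))^2 = q^2 := by rw [mul_pow]; nlinarith
    have h2 : 0 ≤ ‖y‖ * (t+s) := by positivity
    nlinarith
  -- s < r * q  and  t < q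
  have hrq2 : (r * q)^2 = 2 * (1 + t^2) := by rw [mul_pow, hr2, hq2]
  have hrq0 : 0 ≤ r * q := mul_nonneg hr0 hq0.le
  have hsrq : s < r * q := by
    have hprod : (r*q - s)*(r*q + s) = 1 := by linear_combination hrq2 - hs2
    by_contra hcon
    push_neg at hcon
    have h1 : (r*q - s)*(r*q + s) ≤ 0 :=
      mul_nonpos_of_nonpos_of_nonneg (by linarith) (by linarith)
    linarith
  have htq : t < q := by
    have hprod : (q - t)*(q + t) = 1 := by linear_combination hq2
    by_contra hcon
    push_neg at hcon
    have h1 : (q - t)*(q + t) ≤ 0 :=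
      mul_nonpos_of_nonpos_of_nonneg (by linarith) (by linarith)
    linarith
  constructor
  · -- (r-1)*(t+s) < q
    have hlow : (r - 1) * (t + s) < q := by
      have h1 : (r-1)*t < (r-1)*q := mul_lt_mul_of_pos_left htq (by linarith)
      have h2 : (r-1)*s < (r-1)*(r*q) := mul_lt_mul_of_pos_left hsrq (by linarith)
      have e : (r-1)*q + (r-1)*(r*q) = q := by linear_combination q * hr2
      have e2 : (r-1)*(t+s) = (r-1)*t + (r-1)*s := by ring
      linarith
    refine lt_of_mul_lt_mul_right ?_ hd.le
    rw [hNq]; exact hlow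
  · -- q < (r+1)*(t+s) : from ((r+1)s)^2 - (q-(r+1)t)^2 = 2(r+1)q(q+t) > 0
    have hup : q < (r + 1) * (t + s) := by
      rcases le_or_gt q ((r+1)*t) with hc | hc
      · have h1 : 0 < (r+1)*s := mul_pos (by linarith) hsp
        have e2 : (r+1)*(t+s) = (r+1)*t + (r+1)*s := by ring
        linarith
      · have hA2B2 : ((r+1)*s)^2 - (q - (r+1)*t)^2 = 2*(r+1)*q*(q+t) := by
          linear_combination (r+1)^2 * hs2 - (2*r+3) * hq2 + (1+t^2) * hr2
        have hpos : 0 < 2*(r+1)*q*(q+t) := by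
          have := mul_pos hq0 hqt
          have h2 : (0:ℝ) < 2*(r+1) := by linarith
          calc (0:ℝ) < 2*(r+1) * (q*(q+t)) := mul_pos h2 this
          _ = 2*(r+1)*q*(q+t) := by ring
        have hBA : q - (r+1)*t < (r+1)*s := by
          have hB2A2 : (q - (r+1)*t)^2 < ((r+1)*s)^2 := by linarith
          have hA0 : 0 ≤ (r+1)*s := le_of_lt (mul_pos (by linarith) hsp)
          exact lt_of_pow_lt_pow_left₀ 2 hA0 hB2A2
        have e2 : (r+1)*(t+s) = (r+1)*t + (r+1)*s := by ring
        linarith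
    refine lt_of_mul_lt_mul_right ?_ hd.le
    rw [hNq]; exact hup
end

section
/- Let g be a nonvanishing holomorphic function and ω = h dz a nonvanishing holomorphic 1-form on a domain D ⊂ C, with φ := g_z/(g² h). If g̃ = (a g + b)/(b̄ g + ā) and ω̃ = (b̄ g + ā)² ω with |a|² - |b|² = 1, and φ̃ := g̃_z/(g̃² h̃) where ω̃ = h̃ dz, then φ̃ = φ/Δ², where Δ := (a g + b)(ā/g + b̄). -/
open Complex ComplexConjugate

/-!
The map `g ↦ (a g + b)/(b̄ g + ā)` is a Möbius transformation of determinant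
`|a|² - |b|² = 1`, so `g̃_z = g_z / (b̄ g + ā)²`, while `g̃² h̃ = (a g + b)² h`.
Hence `φ̃ = g_z / ((a g + b)² (b̄ g + ā)² h)`, which is `φ / Δ²` since `Δ = (a g + b)(b̄ g + ā)/g`.
-/

theorem Complex.mul_conj_sub_mul_conj (a b : ℂ) :
    a * conj a - b * conj b = ((‖a‖ ^ 2 - ‖b‖ ^ 2 : ℝ) : ℂ) := by
  push_cast
  rw [mul_conj', mul_conj']

theorem HasDerivAt.linearFractional {𝕜 : Type*} [NontriviallyNormedField 𝕜] {f : 𝕜 → 𝕜}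
    {f' z : 𝕜} (a b c d : 𝕜) (hf : HasDerivAt f f' z) (hden : c * f z + d ≠ 0) :
    HasDerivAt (fun w => (a * f w + b) / (c * f w + d))
      ((a * d - b * c) * f' / (c * f z + d) ^ 2) z := by
  refine (((hf.const_mul a).add_const b).fun_div ((hf.const_mul c).add_const d)
    hden).congr_deriv ?_
  ring

theorem div_linearFractional_sq_mul_eq_div_div_sq {K : Type*} [Field K] {a b c d g g' h : K}
    (hg : g ≠ 0) :
    g' / (c * g + d) ^ 2 / (((a * g + b) / (c * g + d)) ^ 2 * ((c * g + d) ^ 2 * h)) =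
      g' / (g ^ 2 * h) / ((a * g + b) * (d / g + c)) ^ 2 := by
  have hsum : d / g + c = (c * g + d) / g := by field_simp; ring
  rw [hsum]
  by_cases hv : c * g + d = 0
  · simp [hv]
  by_cases hu : a * g + b = 0
  · simp [hu]
  field_simp

theorem stmt6_general (D : Set ℂ) (hD : IsOpen D)
    (g h : ℂ → ℂ) (a b : ℂ)
    (hg : DifferentiableOn ℂ g D)
    (hg0 : ∀ z ∈ D, g z ≠ 0)
    (hab : ‖a‖ ^ 2 - ‖b‖ ^ 2 = 1)
    (hden : ∀ z ∈ D, (starRingEnd ℂ) b * g z + (starRingEnd ℂ) a ≠ 0)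
    (gt ht φ φt Δ : ℂ → ℂ)
    (hgt : ∀ z, gt z = (a * g z + b) / ((starRingEnd ℂ) b * g z + (starRingEnd ℂ) a))
    (hht : ∀ z, ht z = ((starRingEnd ℂ) b * g z + (starRingEnd ℂ) a) ^ 2 * h z)
    (hφ : ∀ z, φ z = deriv g z / (g z ^ 2 * h z))
    (hφt : ∀ z, φt z = deriv gt z / (gt z ^ 2 * ht z))
    (hΔ : ∀ z, Δ z = (a * g z + b) * ((starRingEnd ℂ) a / g z + (starRingEnd ℂ) b)) :
    ∀ z ∈ D, φt z = φ z / Δ z ^ 2 := by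
  intro z hz
  have hdet : a * conj a - b * conj b = 1 := by
    rw [mul_conj_sub_mul_conj, hab, ofReal_one]
  have hgt' : HasDerivAt gt (deriv g z / (conj b * g z + conj a) ^ 2) z := by
    rw [funext hgt]
    have := (hg.differentiableAt (hD.mem_nhds hz)).hasDerivAt.linearFractional a b _ _ (hden z hz)
    rwa [hdet, one_mul] at this
  rw [hφt, hgt'.deriv, hgt, hht, hφ, hΔ]
  exact div_linearFractional_sq_mul_eq_div_div_sq (hg0 z hz)

theorem stmt6 (D : Set ℂ) (hD : IsOpen D)
    (g h : ℂ → ℂ) (a b : ℂ)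
    (hg : DifferentiableOn ℂ g D) (hh : DifferentiableOn ℂ h D)
    (hg0 : ∀ z ∈ D, g z ≠ 0) (hh0 : ∀ z ∈ D, h z ≠ 0)
    (hab : ‖a‖ ^ 2 - ‖b‖ ^ 2 = 1)
    (hden : ∀ z ∈ D, (starRingEnd ℂ) b * g z + (starRingEnd ℂ) a ≠ 0)
    (gt ht φ φt Δ : ℂ → ℂ)
    (hgt : ∀ z, gt z = (a * g z + b) / ((starRingEnd ℂ) b * g z + (starRingEnd ℂ) a))
    (hht : ∀ z, ht z = ((starRingEnd ℂ) b * g z + (starRingEnd ℂ) a) ^ 2 * h z)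
    (hφ : ∀ z, φ z = deriv g z / (g z ^ 2 * h z))
    (hφt : ∀ z, φt z = deriv gt z / (gt z ^ 2 * ht z))
    (hΔ : ∀ z, Δ z = (a * g z + b) * ((starRingEnd ℂ) a / g z + (starRingEnd ℂ) b)) :
    ∀ z ∈ D, φt z = φ z / Δ z ^ 2 :=
  stmt6_general D hD g h a b hg hg0 hab hden gt ht φ φt Δ hgt hht hφ hφt hΔ
end

section
/- Under the same setting, the vector field ξ satisfies ξ(Im(V^k φ)) = |g h φ|² · Re(V^{k+1} φ). -/
open Complex

/-- Iterated operator `V` applied to `φ = g_z/(g²h)`: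
`V⁰φ = φ`, `V^{k+1}φ = (g/g_z)·(V^kφ)_z`. -/
noncomputable def Vpow (g h : ℂ → ℂ) : ℕ → ℂ → ℂ
  | 0 => fun z => deriv g z / (g z ^ 2 * h z)
  | (k + 1) => fun z => (g z / deriv g z) * deriv (Vpow g h k) z

/-- Wirtinger derivative `u_z = ½(u_x - i u_y)` of a real-valued function. -/
noncomputable def wirtRe (u : ℂ → ℝ) (z : ℂ) : ℂ :=
  (1/2 : ℂ) * ((fderiv ℝ u z 1 : ℝ) - Complex.I * ((fderiv ℝ u z Complex.I : ℝ) : ℂ))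

/-- The vector field `ξ = i·overline{ghφ}·∂_z - i·ghφ·∂_{z̄}` applied to a
real-valued function `u` (using `u_{z̄} = conj u_z`). -/
noncomputable def xiAct (g h : ℂ → ℂ) (u : ℂ → ℝ) (z : ℂ) : ℂ :=
  Complex.I * (starRingEnd ℂ) (g z * h z * Vpow g h 0 z) * wirtRe u z
    - Complex.I * (g z * h z * Vpow g h 0 z) * (starRingEnd ℂ) (wirtRe u z)

open ComplexConjugate

/-!
With `q = ghφ = g_z/g` and `c = (V^kφ)_z` one has `V^{k+1}φ = c/q`. For a holomorphic `f`,
`(Im f)_z = -i f'/2`, so `ξ(Im f) = Re(q̄ f')`, and `Re(q̄ c) = |q|² Re(c/q)`.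
-/

theorem analyticOnNhd_Vpow {D : Set ℂ} (hD : IsOpen D) {g h : ℂ → ℂ}
    (hg : DifferentiableOn ℂ g D) (hh : DifferentiableOn ℂ h D)
    (hg0 : ∀ z ∈ D, g z ≠ 0) (hh0 : ∀ z ∈ D, h z ≠ 0)
    (hg1 : ∀ z ∈ D, deriv g z ≠ 0) (k : ℕ) :
    AnalyticOnNhd ℂ (Vpow g h k) D := by
  have hga : AnalyticOnNhd ℂ g D := hg.analyticOnNhd hD
  induction k with
  | zero =>
    exact hga.deriv.div ((hga.pow 2).mul (hh.analyticOnNhd hD))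
      fun z hz => mul_ne_zero (pow_ne_zero 2 (hg0 z hz)) (hh0 z hz)
  | succ k ih => exact (hga.div hga.deriv hg1).mul ih.deriv

theorem mul_Vpow_zero {g h : ℂ → ℂ} {z : ℂ} (hh : h z ≠ 0) :
    g z * h z * Vpow g h 0 z = deriv g z / g z := by
  rw [Vpow]
  rcases eq_or_ne (g z) 0 with hg | hg
  · simp [hg]
  · field_simp

theorem Vpow_succ_apply (g h : ℂ → ℂ) (k : ℕ) (z : ℂ) :
    Vpow g h (k + 1) z = deriv (Vpow g h k) z / (deriv g z / g z) := by
  simp only [Vpow]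
  rw [div_div_eq_mul_div]
  ring

theorem wirtRe_im_of_hasDerivAt {f : ℂ → ℂ} {c z : ℂ} (hf : HasDerivAt f c z) :
    wirtRe (fun w => (f w).im) z = -I * c / 2 := by
  have hF : HasFDerivAt (fun w => (f w).im) _ z :=
    imCLM.hasFDerivAt.comp z (hf.hasFDerivAt.restrictScalars ℝ)
  rw [wirtRe, hF.fderiv]
  apply Complex.ext <;> simp <;> ring

theorem I_mul_sub_conj_neg_I_mul_div_two (q c : ℂ) :
    I * conj q * (-I * c / 2) - I * q * conj (-I * c / 2) = ((conj q * c).re : ℂ) := by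
  simp only [map_div₀, map_mul, map_neg, conj_I, map_ofNat]
  apply Complex.ext <;> simp <;> ring

theorem xiAct_im_of_hasDerivAt {g h f : ℂ → ℂ} {c z : ℂ} (hf : HasDerivAt f c z) :
    xiAct g h (fun w => (f w).im) z = ((conj (g z * h z * Vpow g h 0 z) * c).re : ℂ) := by
  rw [xiAct, wirtRe_im_of_hasDerivAt hf, I_mul_sub_conj_neg_I_mul_div_two]

theorem sq_norm_mul_re_div (q c : ℂ) : ‖q‖ ^ 2 * (c / q).re = (conj q * c).re := by
  rcases eq_or_ne q 0 with rfl | hq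
  · simp
  · have hq' : normSq q ≠ 0 := (normSq_pos.2 hq).ne'
    rw [div_re, ← normSq_eq_norm_sq, mul_re, conj_re, conj_im]
    field_simp
    ring

theorem stmt9_general (D : Set ℂ) (hD : IsOpen D) (g h : ℂ → ℂ)
    (hg : DifferentiableOn ℂ g D) (hh : DifferentiableOn ℂ h D)
    (hg0 : ∀ z ∈ D, g z ≠ 0) (hh0 : ∀ z ∈ D, h z ≠ 0)
    (hg1 : ∀ z ∈ D, deriv g z ≠ 0)
    (k : ℕ) (z : ℂ) (hz : z ∈ D) :
    xiAct g h (fun w => (Vpow g h k w).im) z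
      = (((‖g z * h z * Vpow g h 0 z‖ ^ 2)
          * (Vpow g h (k + 1) z).re : ℝ) : ℂ) := by
  have hV : HasDerivAt (Vpow g h k) (deriv (Vpow g h k) z) z :=
    (analyticOnNhd_Vpow hD hg hh hg0 hh0 hg1 k z hz).differentiableAt.hasDerivAt
  rw [xiAct_im_of_hasDerivAt hV, Vpow_succ_apply, mul_Vpow_zero (hh0 z hz), sq_norm_mul_re_div]

theorem stmt9 (D : Set ℂ) (hD : IsOpen D) (g h : ℂ → ℂ)
    (hg : DifferentiableOn ℂ g D) (hh : DifferentiableOn ℂ h D)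
    (hg0 : ∀ z ∈ D, g z ≠ 0) (hh0 : ∀ z ∈ D, h z ≠ 0)
    (hg1 : ∀ z ∈ D, deriv g z ≠ 0)
    (k : ℕ) (z : ℂ) (hz : z ∈ D) (hgz : ‖g z‖ = 1) :
    xiAct g h (fun w => (Vpow g h k w).im) z
      = (((‖g z * h z * Vpow g h 0 z‖ ^ 2)
          * (Vpow g h (k + 1) z).re : ℝ) : ℂ) :=
  stmt9_general D hD g h hg hh hg0 hh0 hg1 k z hz
end

section
/- Under the same setting, for every positive integer k there exist real-valued smooth functions τ₁,…,τ_k on D with τ_k = |g h φ|^{2k} such that ξ^k(Re φ) = Σ_{ℓ=1}^{k} τ_ℓ · Re(i^ℓ V^ℓ φ) pointwise. -/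
open Complex

/-- The real-valued operator `ξ` acting on real-valued functions, ready to iterate. -/
noncomputable def xiOp (g h : ℂ → ℂ) (u : ℂ → ℝ) : ℂ → ℝ :=
  fun z => (xiAct g h u z).re

section Aux

variable (g h : ℂ → ℂ)

/-- `W = ghφ`. -/
noncomputable def Wfun (z : ℂ) : ℂ := g z * h z * Vpow g h 0 z

/-- `q = |ghφ|²`. -/
noncomputable def qfun (z : ℂ) : ℝ := Complex.normSq (Wfun g h z)

/-- The coefficients: `Sc n` are the coefficients for `ξ^(n+1)`. -/
noncomputable def Sc : ℕ → ℕ → ℂ → ℝ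
  | 0 => fun ℓ z => if ℓ = 1 then qfun g h z else 0
  | (n+1) => fun ℓ z => xiOp g h (Sc n ℓ) z + qfun g h z * Sc n (ℓ - 1) z

variable {g h}

lemma wirtRe_congr {u v : ℂ → ℝ} {z : ℂ} (huv : u =ᶠ[nhds z] v) :
    wirtRe u z = wirtRe v z := by
  unfold wirtRe; rw [huv.fderiv_eq]

lemma xiOp_congr {u v : ℂ → ℝ} {z : ℂ} (huv : u =ᶠ[nhds z] v) :
    xiOp g h u z = xiOp g h v z := by
  unfold xiOp xiAct; rw [wirtRe_congr huv]

lemma wirtRe_zero (z : ℂ) : wirtRe (fun _ => (0:ℝ)) z = 0 := by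
  simp [wirtRe, fderiv_const]

lemma xiOp_zero (z : ℂ) : xiOp g h (fun _ => 0) z = 0 := by
  simp [xiOp, xiAct, wirtRe_zero]

lemma xiOp_two (u : ℂ → ℝ) (z : ℂ) :
    xiOp g h u z = 2 * (Complex.I * (starRingEnd ℂ) (Wfun g h z) * wirtRe u z).re := by
  have h1 : xiAct g h u z = (Complex.I * (starRingEnd ℂ) (Wfun g h z) * wirtRe u z)
      + (starRingEnd ℂ) (Complex.I * (starRingEnd ℂ) (Wfun g h z) * wirtRe u z) := by
    simp only [xiAct, Wfun, map_mul, Complex.conj_conj, Complex.conj_I]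
    ring
  simp only [xiOp, h1, Complex.add_re, Complex.conj_re]
  ring

lemma wirtRe_sum {ι : Type*} (s : Finset ι) (f : ι → ℂ → ℝ) {z : ℂ}
    (hf : ∀ i ∈ s, DifferentiableAt ℝ (f i) z) :
    wirtRe (fun w => ∑ i ∈ s, f i w) z = ∑ i ∈ s, wirtRe (f i) z := by
  unfold wirtRe
  rw [fderiv_fun_sum hf]
  simp only [ContinuousLinearMap.coe_sum', Finset.sum_apply, Complex.ofReal_sum,
    Finset.mul_sum, ← Finset.sum_sub_distrib]

lemma wirtRe_mul {u v : ℂ → ℝ} {z : ℂ} (hu : DifferentiableAt ℝ u z)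
    (hv : DifferentiableAt ℝ v z) :
    wirtRe (fun w => u w * v w) z = wirtRe u z * (v z : ℂ) + (u z : ℂ) * wirtRe v z := by
  unfold wirtRe
  rw [fderiv_fun_mul hu hv]
  simp only [ContinuousLinearMap.add_apply, ContinuousLinearMap.smul_apply, smul_eq_mul]
  push_cast
  ring

lemma wirtRe_re {F : ℂ → ℂ} {z : ℂ} (hF : DifferentiableAt ℂ F z) :
    wirtRe (fun w => (F w).re) z = deriv F z / 2 := by
  have h1 : fderiv ℝ (fun w => (F w).re) z
      = Complex.reCLM.comp ((fderiv ℂ F z).restrictScalars ℝ) := by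
    have := (Complex.reCLM.hasFDerivAt (x := F z)).comp z
      ((hF.hasFDerivAt).restrictScalars ℝ)
    exact this.fderiv
  have h0 : fderiv ℂ F z = ContinuousLinearMap.smulRight (1 : ℂ →L[ℂ] ℂ) (deriv F z) :=
    hF.hasDerivAt.hasFDerivAt.fderiv
  unfold wirtRe
  rw [h1, h0]
  simp only [ContinuousLinearMap.coe_comp', Function.comp_apply,
    ContinuousLinearMap.coe_restrictScalars', ContinuousLinearMap.smulRight_apply,
    ContinuousLinearMap.one_apply, smul_eq_mul, one_mul, Complex.reCLM_apply]
  rcases deriv F z with ⟨x, y⟩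
  simp [Complex.ext_iff, Complex.mul_re, Complex.mul_im, Complex.div_re, Complex.div_im,
    Complex.normSq]
  constructor <;> ring

lemma algebra_key (W A V c : ℂ) (a r : ℝ) :
    2 * (Complex.I * (starRingEnd ℂ) W * (A * (r:ℂ) + (a:ℂ) * (c * (W*V)/2))).re
      = (2*(Complex.I * (starRingEnd ℂ) W * A).re) * r
        + Complex.normSq W * a * ((Complex.I * c) * V).re := by
  rcases W with ⟨w1, w2⟩
  simp [Complex.mul_re, Complex.mul_im, Complex.add_re, Complex.add_im, Complex.normSq_apply,
    Complex.div_re, Complex.div_im, Complex.normSq]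
  ring

lemma xiOp_sum {ι : Type*} (s : Finset ι) (f : ι → ℂ → ℝ) {z : ℂ}
    (hf : ∀ i ∈ s, DifferentiableAt ℝ (f i) z) :
    xiOp g h (fun w => ∑ i ∈ s, f i w) z = ∑ i ∈ s, xiOp g h (f i) z := by
  rw [xiOp_two, wirtRe_sum s f hf, Finset.mul_sum]
  rw [Complex.re_sum, Finset.mul_sum]
  exact Finset.sum_congr rfl fun i _ => (xiOp_two (f i) z).symm

lemma Sc_zero_left (n : ℕ) : Sc g h n 0 = fun _ => 0 := by
  induction n with
  | zero => funext z; simp [Sc]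
  | succ n ih =>
      funext z
      show xiOp g h (Sc g h n 0) z + qfun g h z * Sc g h n (0-1) z = 0
      rw [show (0:ℕ) - 1 = 0 from rfl, ih, xiOp_zero]
      simp

lemma Sc_zero_gt (n ℓ : ℕ) (hℓ : n + 1 < ℓ) : Sc g h n ℓ = fun _ => 0 := by
  induction n generalizing ℓ with
  | zero => funext z; simp [Sc, show ℓ ≠ 1 by omega]
  | succ n ih =>
      funext z
      show xiOp g h (Sc g h n ℓ) z + qfun g h z * Sc g h n (ℓ-1) z = 0
      rw [ih ℓ (by omega), ih (ℓ-1) (by omega), xiOp_zero]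
      simp

lemma Sc_top (n : ℕ) (z : ℂ) : Sc g h n (n+1) z = qfun g h z ^ (n+1) := by
  induction n with
  | zero => simp [Sc]
  | succ n ih =>
      show xiOp g h (Sc g h n (n+2)) z + qfun g h z * Sc g h n (n+2-1) z = _
      rw [Sc_zero_gt n (n+2) (by omega), xiOp_zero,
        show n+2-1 = n+1 from rfl, ih]
      ring


section Main

variable {D : Set ℂ} (hD : IsOpen D)
variable (hg : DifferentiableOn ℂ g D) (hh : DifferentiableOn ℂ h D)
variable (hg0 : ∀ z ∈ D, g z ≠ 0) (hh0 : ∀ z ∈ D, h z ≠ 0)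
variable (hg1 : ∀ z ∈ D, deriv g z ≠ 0)

include hD hg hh hg0 hh0 hg1

lemma Vpow_analytic (ℓ : ℕ) : AnalyticOnNhd ℂ (Vpow g h ℓ) D := by
  induction ℓ with
  | zero =>
      exact (((hg.analyticOnNhd hD).deriv).div
        (((hg.analyticOnNhd hD).pow 2).mul (hh.analyticOnNhd hD))
        (fun z hz => mul_ne_zero (pow_ne_zero 2 (hg0 z hz)) (hh0 z hz)))
  | succ n ih =>
      exact ((hg.analyticOnNhd hD).div ((hg.analyticOnNhd hD).deriv) hg1).mul ih.deriv

lemma deriv_Vpow {z : ℂ} (hz : z ∈ D) (ℓ : ℕ) :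
    deriv (Vpow g h ℓ) z = (deriv g z / g z) * Vpow g h (ℓ+1) z := by
  have : Vpow g h (ℓ+1) z = (g z / deriv g z) * deriv (Vpow g h ℓ) z := rfl
  rw [this]
  field_simp [hg0 z hz, hg1 z hz]

lemma Wfun_eq {z : ℂ} (hz : z ∈ D) : Wfun g h z = deriv g z / g z := by
  show g z * h z * (deriv g z / (g z ^ 2 * h z)) = deriv g z / g z
  field_simp [hg0 z hz, hh0 z hz]

lemma Wfun_analyticR : AnalyticOnNhd ℝ (Wfun g h) D :=
  (((hg.analyticOnNhd hD).mul (hh.analyticOnNhd hD)).mul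
    (Vpow_analytic hD hg hh hg0 hh0 hg1 0)).restrictScalars

lemma qfun_analyticR : AnalyticOnNhd ℝ (qfun g h) D := by
  have hW := Wfun_analyticR hD hg hh hg0 hh0 hg1
  have hWc : AnalyticOnNhd ℝ (fun z => (starRingEnd ℂ) (Wfun g h z)) D :=
    Complex.conjCLE.toContinuousLinearMap.comp_analyticOnNhd hW
  have : qfun g h = fun z => ((Wfun g h z) * (starRingEnd ℂ) (Wfun g h z)).re := by
    funext z
    simp [qfun, Complex.mul_conj]
  rw [this]
  exact Complex.reCLM.comp_analyticOnNhd (hW.mul hWc)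

lemma wirtRe_analyticR {u : ℂ → ℝ} (hu : AnalyticOnNhd ℝ u D) :
    AnalyticOnNhd ℝ (fun z => wirtRe u z) D := by
  have hf : AnalyticOnNhd ℝ (fun z => fderiv ℝ u z) D := hu.fderiv_of_isOpen hD
  have h1 : AnalyticOnNhd ℝ (fun z => ((fderiv ℝ u z 1 : ℝ) : ℂ)) D :=
    Complex.ofRealCLM.comp_analyticOnNhd
      ((ContinuousLinearMap.apply ℝ ℝ (1:ℂ)).comp_analyticOnNhd hf)
  have h2 : AnalyticOnNhd ℝ (fun z => ((fderiv ℝ u z Complex.I : ℝ) : ℂ)) D :=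
    Complex.ofRealCLM.comp_analyticOnNhd
      ((ContinuousLinearMap.apply ℝ ℝ (Complex.I)).comp_analyticOnNhd hf)
  exact analyticOnNhd_const.mul (h1.sub (analyticOnNhd_const.mul h2))

lemma xiOp_analyticR {u : ℂ → ℝ} (hu : AnalyticOnNhd ℝ u D) :
    AnalyticOnNhd ℝ (xiOp g h u) D := by
  have hW := Wfun_analyticR hD hg hh hg0 hh0 hg1
  have hWc : AnalyticOnNhd ℝ (fun z => (starRingEnd ℂ) (Wfun g h z)) D :=
    Complex.conjCLE.toContinuousLinearMap.comp_analyticOnNhd hW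
  have hwr := wirtRe_analyticR hD hg hh hg0 hh0 hg1 hu
  have hwrc : AnalyticOnNhd ℝ (fun z => (starRingEnd ℂ) (wirtRe u z)) D :=
    Complex.conjCLE.toContinuousLinearMap.comp_analyticOnNhd hwr
  have : AnalyticOnNhd ℝ (fun z => xiAct g h u z) D := by
    unfold xiAct
    exact ((analyticOnNhd_const.mul hWc).mul hwr).sub
      (((analyticOnNhd_const.mul hW).mul hwrc))
  exact Complex.reCLM.comp_analyticOnNhd this

lemma Sc_analyticR (n ℓ : ℕ) : AnalyticOnNhd ℝ (Sc g h n ℓ) D := by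
  induction n generalizing ℓ with
  | zero =>
      by_cases hℓ : ℓ = 1
      · simp only [Sc, hℓ, if_true]
        exact qfun_analyticR hD hg hh hg0 hh0 hg1
      · simp only [Sc, hℓ, if_false]
        exact analyticOnNhd_const
  | succ n ih =>
      show AnalyticOnNhd ℝ (fun z => xiOp g h (Sc g h n ℓ) z + qfun g h z * Sc g h n (ℓ-1) z) D
      exact (xiOp_analyticR hD hg hh hg0 hh0 hg1 (ih ℓ)).add
        ((qfun_analyticR hD hg hh hg0 hh0 hg1).mul (ih (ℓ-1)))

lemma reTerm_diff {z : ℂ} (hz : z ∈ D) (ℓ : ℕ) :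
    DifferentiableAt ℝ (fun w => (Complex.I^ℓ * Vpow g h ℓ w).re) z := by
  have hVC : DifferentiableAt ℂ (fun w => Complex.I^ℓ * Vpow g h ℓ w) z :=
    (differentiableAt_const _).mul
      ((Vpow_analytic hD hg hh hg0 hh0 hg1 ℓ z hz).differentiableAt)
  exact Complex.reCLM.differentiableAt.comp z (hVC.restrictScalars ℝ)

lemma key_term {z : ℂ} (hz : z ∈ D) (a : ℂ → ℝ) (ha : DifferentiableAt ℝ a z) (ℓ : ℕ) :
    xiOp g h (fun w => a w * (Complex.I^ℓ * Vpow g h ℓ w).re) z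
      = xiOp g h a z * (Complex.I^ℓ * Vpow g h ℓ z).re
        + qfun g h z * a z * (Complex.I^(ℓ+1) * Vpow g h (ℓ+1) z).re := by
  have hVd : DifferentiableAt ℂ (Vpow g h ℓ) z :=
    (Vpow_analytic hD hg hh hg0 hh0 hg1 ℓ z hz).differentiableAt
  have hVC : DifferentiableAt ℂ (fun w => Complex.I^ℓ * Vpow g h ℓ w) z :=
    (differentiableAt_const _).mul hVd
  have hVr : DifferentiableAt ℝ (fun w => (Complex.I^ℓ * Vpow g h ℓ w).re) z :=
    Complex.reCLM.differentiableAt.comp z (hVC.restrictScalars ℝ)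
  have hder : deriv (fun w => Complex.I^ℓ * Vpow g h ℓ w) z
      = Complex.I^ℓ * ((Wfun g h z) * Vpow g h (ℓ+1) z) := by
    rw [deriv_const_mul _ hVd, deriv_Vpow hD hg hh hg0 hh0 hg1 hz ℓ,
      Wfun_eq hD hg hh hg0 hh0 hg1 hz]
  rw [xiOp_two, wirtRe_mul ha hVr, wirtRe_re hVC, hder, xiOp_two,
    show Complex.I^(ℓ+1) = Complex.I * Complex.I^ℓ from pow_succ' Complex.I ℓ]
  have := algebra_key (Wfun g h z) (wirtRe a z) (Vpow g h (ℓ+1) z) (Complex.I^ℓ)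
    (a z) ((Complex.I^ℓ * Vpow g h ℓ z).re)
  simp only [qfun]
  exact this

lemma xi_iter (n : ℕ) : ∀ z ∈ D,
    (xiOp g h)^[n+1] (fun w => (Vpow g h 0 w).re) z
      = ∑ ℓ ∈ Finset.Icc 1 (n+1), Sc g h n ℓ z * (Complex.I^ℓ * Vpow g h ℓ z).re := by
  induction n with
  | zero =>
      intro z hz
      rw [Function.iterate_one]
      have e : (fun w => (Vpow g h 0 w).re)
          = (fun w => (fun _ : ℂ => (1:ℝ)) w * (Complex.I^0 * Vpow g h 0 w).re) := by
        funext w; simp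
      rw [e, key_term hD hg hh hg0 hh0 hg1 hz (fun _ => (1:ℝ)) (differentiableAt_const 1) 0]
      have hxi1 : xiOp g h (fun _ => (1:ℝ)) z = 0 := by
        have hw : wirtRe (fun _ => (1:ℝ)) z = 0 := by simp [wirtRe, fderiv_const]
        rw [xiOp_two, hw]; simp
      rw [hxi1]
      simp [Sc]
  | succ n ih =>
      intro z hz
      rw [Function.iterate_succ_apply']
      have heq : (xiOp g h)^[n+1] (fun w => (Vpow g h 0 w).re) =ᶠ[nhds z]
          (fun w => ∑ ℓ ∈ Finset.Icc 1 (n+1),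
            Sc g h n ℓ w * (Complex.I^ℓ * Vpow g h ℓ w).re) := by
        filter_upwards [hD.mem_nhds hz] with w hw using ih w hw
      rw [xiOp_congr heq]
      have hdiff : ∀ ℓ ∈ Finset.Icc 1 (n+1), DifferentiableAt ℝ
          (fun w => Sc g h n ℓ w * (Complex.I^ℓ * Vpow g h ℓ w).re) z := by
        intro ℓ _
        exact ((Sc_analyticR hD hg hh hg0 hh0 hg1 n ℓ z hz).differentiableAt).mul
          (reTerm_diff hD hg hh hg0 hh0 hg1 hz ℓ)
      rw [xiOp_sum _ _ hdiff]
      rw [Finset.sum_congr rfl (fun ℓ _ => key_term hD hg hh hg0 hh0 hg1 hz (Sc g h n ℓ)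
        ((Sc_analyticR hD hg hh hg0 hh0 hg1 n ℓ z hz).differentiableAt) ℓ)]
      have hsplit : ∀ ℓ, Sc g h (n+1) ℓ z * (Complex.I^ℓ * Vpow g h ℓ z).re
          = xiOp g h (Sc g h n ℓ) z * (Complex.I^ℓ * Vpow g h ℓ z).re
            + qfun g h z * Sc g h n (ℓ-1) z * (Complex.I^ℓ * Vpow g h ℓ z).re := by
        intro ℓ
        show (xiOp g h (Sc g h n ℓ) z + qfun g h z * Sc g h n (ℓ-1) z) * _ = _
        ring
      rw [Finset.sum_add_distrib, Finset.sum_congr rfl (fun ℓ _ => hsplit ℓ),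
        Finset.sum_add_distrib]
      congr 1
      · -- top term of first sum vanishes
        have h1 : Finset.Icc 1 (n+2) = insert (n+2) (Finset.Icc 1 (n+1)) := by
          ext x; simp only [Finset.mem_Icc, Finset.mem_insert]; omega
        rw [h1, Finset.sum_insert (by simp [Finset.mem_Icc])]
        rw [Sc_zero_gt n (n+2) (by omega), xiOp_zero]
        simp
      · -- reindex second sum
        have h1 : Finset.Icc 1 (n+2) = insert 1 (Finset.Icc 2 (n+2)) := by
          ext x; simp only [Finset.mem_Icc, Finset.mem_insert]; omega
        rw [h1, Finset.sum_insert (by simp [Finset.mem_Icc])]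
        have h2 : Sc g h n (1-1) z = 0 := by
          rw [show (1:ℕ)-1 = 0 from rfl, Sc_zero_left]
        rw [h2]
        rw [show Finset.Icc 2 (n+2) = (Finset.Icc 1 (n+1)).map (addRightEmbedding 1) from
          (Finset.map_add_right_Icc 1 (n+1) 1).symm, Finset.sum_map]
        simp [addRightEmbedding_apply]

end Main

end Aux

theorem stmt11 (D : Set ℂ) (hD : IsOpen D) (g h : ℂ → ℂ)
    (hg : DifferentiableOn ℂ g D) (hh : DifferentiableOn ℂ h D)
    (hg0 : ∀ z ∈ D, g z ≠ 0) (hh0 : ∀ z ∈ D, h z ≠ 0)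
    (hg1 : ∀ z ∈ D, deriv g z ≠ 0)
    (k : ℕ) (hk : 1 ≤ k) :
    ∃ τ : ℕ → ℂ → ℝ,
      (∀ ℓ, ContDiffOn ℝ (⊤ : ℕ∞) (τ ℓ) D) ∧
      (∀ z ∈ D, τ k z = ‖g z * h z * Vpow g h 0 z‖ ^ (2 * k)) ∧
      ∀ z ∈ D,
        (xiOp g h)^[k] (fun w => (Vpow g h 0 w).re) z
          = ∑ ℓ ∈ Finset.Icc 1 k, τ ℓ z * (Complex.I ^ ℓ * Vpow g h ℓ z).re := by
  obtain ⟨n, rfl⟩ : ∃ n, k = n + 1 := ⟨k-1, by omega⟩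
  refine ⟨Sc g h n, fun ℓ => (Sc_analyticR hD hg hh hg0 hh0 hg1 n ℓ).contDiffOn_of_completeSpace,
    ?_, xi_iter hD hg hh hg0 hh0 hg1 n⟩
  intro z hz
  rw [Sc_top]
  rw [show qfun g h z = ‖g z * h z * Vpow g h 0 z‖^2 from (Complex.sq_norm _).symm]
  rw [← pow_mul]
end
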